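/- arXiv:2504.12894 — 3 statements merged into one kernel-verified Lean document; each statement's English description precedes it below -/
import Mathlib

section
/- The restriction of ψ to Δ_n is injective: if w, w' ∈ Δ_n and ψ(w) = ψ(w'), then w = w'. -/
/-- `Delta n` is the set `Δ_n = {w ∈ ℝ^n : 0 ≤ w_1 ≤ w_2 ≤ ⋯ ≤ w_n ≤ 1}`. -/
def Delta (n : ℕ) : Set (Fin n → ℝ) :=
  {w | Monotone w ∧ ∀ j, 0 ≤ w j ∧ w j ≤ 1}

/-- The monomial map `ψ : ℝ^n → ℝ^n`, `ψ(w)_i = ∏_{j=1}^n w_j^{b_{ij}}`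
(with the convention `0^0 = 1`, automatic for natural-number powers). -/
def psi {n : ℕ} (b : Fin n → Fin n → ℕ) (w : Fin n → ℝ) : Fin n → ℝ :=
  fun i => ∏ j, w j ^ b i j

/-- if the exponent matrix `b` is upper triangular with strictly
positive diagonal, then `ψ` is injective on `Δ_n`. -/
theorem stmt_2 (n : ℕ) (hn : 1 ≤ n) (b : Fin n → Fin n → ℕ)
    (hdiag : ∀ i, 0 < b i i) (htri : ∀ i j : Fin n, j < i → b i j = 0)
    (w w' : Fin n → ℝ) (hw : w ∈ Delta n) (hw' : w' ∈ Delta n)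
    (h : psi b w = psi b w') :
    w = w' := by
  obtain ⟨hmono, hbd⟩ := hw
  obtain ⟨hmono', hbd'⟩ := hw'
  have key : ∀ m : ℕ, ∀ i : Fin n, n - i.val ≤ m → w i = w' i := by
    intro m
    induction m with
    | zero => intro i hi; exact absurd hi (by have := i.isLt; omega)
    | succ m ih =>
      intro i _
      have hgt : ∀ j : Fin n, i < j → w j = w' j := by
        intro j hj
        exact ih j (by have := j.isLt; have : i.val < j.val := hj; omega)
      have hi := congrFun h i
      simp only [psi] at hi
      rw [← Finset.mul_prod_erase Finset.univ _ (Finset.mem_univ i),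
          ← Finset.mul_prod_erase Finset.univ (fun j => w' j ^ b i j)
            (Finset.mem_univ i)] at hi
      have hCeq : ∏ j ∈ Finset.univ.erase i, w j ^ b i j
          = ∏ j ∈ Finset.univ.erase i, w' j ^ b i j := by
        apply Finset.prod_congr rfl
        intro j hj
        have hne : j ≠ i := Finset.ne_of_mem_erase hj
        rcases lt_or_gt_of_ne hne with hlt | hgt'
        · rw [htri i j hlt]; simp
        · rw [hgt j hgt']
      rw [hCeq] at hi
      by_cases hC : (∏ j ∈ Finset.univ.erase i, w' j ^ b i j) = 0
      · -- some factor zero: w' j = 0 for some j > i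
        rw [Finset.prod_eq_zero_iff] at hC
        obtain ⟨j, hj, hj0⟩ := hC
        have hbne : b i j ≠ 0 := by
          intro hb0; rw [hb0] at hj0; simp at hj0
        have hij : i < j := by
          rcases lt_trichotomy i j with h1 | h1 | h1
          · exact h1
          · exact absurd (Finset.ne_of_mem_erase hj) (by simp [h1])
          · exact absurd (htri i j h1) hbne
        have hwj0 : w' j = 0 := by
          have := pow_eq_zero_iff hbne |>.mp hj0
          exact this
        have hwj0' : w j = 0 := by rw [hgt j hij, hwj0]
        have h1 : w i = 0 :=
          le_antisymm (hwj0' ▸ hmono hij.le) (hbd i).1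
        have h2 : w' i = 0 :=
          le_antisymm (hwj0 ▸ hmono' hij.le) (hbd' i).1
        rw [h1, h2]
      · have hpow : w i ^ b i i = w' i ^ b i i := mul_right_cancel₀ hC hi
        have hk : b i i ≠ 0 := (hdiag i).ne'
        exact (pow_left_strictMonoOn₀ hk).injOn (hbd i).1 (hbd' i).1 hpow
  funext i
  exact key n i (by omega)
end

section
/- The restriction of ψ to Δ_n is a homeomorphism of Δ_n onto its image ψ(Δ_n) ⊆ ℝ^n, and ψ(Δ_n) is compact. -/
lemma psi_continuous {n : ℕ} (b : Fin n → Fin n → ℕ) : Continuous (psi b) := by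
  refine continuous_pi fun i => ?_
  exact continuous_finset_prod _ fun j _ => (continuous_apply j).pow _

lemma delta_compact (n : ℕ) : IsCompact (Delta n) := by
  have hclosed : IsClosed (Delta n) := by
    have : Delta n =
        (⋂ (i : Fin n) (j : Fin n) (_ : i ≤ j), {w : Fin n → ℝ | w i ≤ w j}) ∩
        ⋂ (j : Fin n), ({w : Fin n → ℝ | 0 ≤ w j} ∩ {w | w j ≤ 1}) := by
      ext w
      simp only [Delta, Set.mem_setOf_eq, Set.mem_inter_iff, Set.mem_iInter, Monotone]
    rw [this]
    refine IsClosed.inter ?_ ?_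
    · exact isClosed_iInter fun i => isClosed_iInter fun j => isClosed_iInter fun _ =>
        isClosed_le (continuous_apply i) (continuous_apply j)
    · exact isClosed_iInter fun j => IsClosed.inter
        (isClosed_le continuous_const (continuous_apply j))
        (isClosed_le (continuous_apply j) continuous_const)
  have hsub : Delta n ⊆ Set.pi Set.univ (fun _ : Fin n => Set.Icc (0:ℝ) 1) := by
    intro w hw j _
    exact ⟨(hw.2 j).1, (hw.2 j).2⟩
  exact IsCompact.of_isClosed_subset (isCompact_univ_pi fun _ => isCompact_Icc) hclosed hsub

lemma psi_injOn {n : ℕ} (b : Fin n → Fin n → ℕ)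
    (hdiag : ∀ i, 0 < b i i) (htri : ∀ i j : Fin n, j < i → b i j = 0) :
    Set.InjOn (psi b) (Delta n) := by
  intro w hw w' hw' hψ
  have key : ∀ i : Fin n, (∀ j, i < j → w j = w' j) → w i = w' i := by
    intro i hj
    have hfac : ∀ j ∈ Finset.univ.erase i, w j ^ b i j = w' j ^ b i j := by
      intro j hjmem
      have hne : j ≠ i := (Finset.mem_erase.mp hjmem).1
      rcases lt_or_gt_of_ne hne with h | h
      · rw [htri i j h, pow_zero, pow_zero]
      · rw [hj j h]
    have heq : w i ^ b i i * ∏ j ∈ Finset.univ.erase i, w j ^ b i j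
        = w' i ^ b i i * ∏ j ∈ Finset.univ.erase i, w' j ^ b i j := by
      have h0 := congrFun hψ i
      simp only [psi] at h0
      rw [← Finset.mul_prod_erase Finset.univ (fun j => w j ^ b i j) (Finset.mem_univ i),
        ← Finset.mul_prod_erase Finset.univ (fun j => w' j ^ b i j) (Finset.mem_univ i)] at h0
      exact h0
    rw [Finset.prod_congr rfl hfac] at heq
    by_cases hP : (∏ j ∈ Finset.univ.erase i, w' j ^ b i j) = 0
    · -- some factor vanishes
      obtain ⟨j, hjmem, hjz⟩ := Finset.prod_eq_zero_iff.mp hP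
      have hne : j ≠ i := (Finset.mem_erase.mp hjmem).1
      have hbij : b i j ≠ 0 := by
        intro h; rw [h, pow_zero] at hjz; exact one_ne_zero hjz
      have hwj : w' j = 0 := (pow_eq_zero_iff hbij).mp hjz
      have hij : i < j := by
        rcases lt_or_gt_of_ne hne with h | h
        · exact absurd (htri i j h) hbij
        · exact h
      have hwj' : w j = 0 := by rw [hj j hij]; exact hwj
      have h1 : w i = 0 := le_antisymm (by rw [← hwj']; exact hw.1 hij.le) (hw.2 i).1
      have h2 : w' i = 0 := le_antisymm (by rw [← hwj]; exact hw'.1 hij.le) (hw'.2 i).1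
      rw [h1, h2]
    · have hpow : w i ^ b i i = w' i ^ b i i := mul_right_cancel₀ hP heq
      exact (pow_left_strictMonoOn₀ (hdiag i).ne').injOn (hw.2 i).1 (hw'.2 i).1 hpow
  -- downward induction
  have all : ∀ m : ℕ, ∀ i : Fin n, n - i.val ≤ m → w i = w' i := by
    intro m
    induction m with
    | zero => intro i hi; omega
    | succ m ih =>
      intro i hi
      refine key i fun j hij => ih j ?_
      have : i.val < j.val := hij
      omega
  funext i
  exact all n i (by omega)

/-- the restriction of `ψ` to `Δ_n` is a homeomorphism of `Δ_n`
onto its image `ψ(Δ_n) ⊆ ℝ^n`, and `ψ(Δ_n)` is compact. -/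
theorem stmt_3 (n : ℕ) (hn : 1 ≤ n) (b : Fin n → Fin n → ℕ)
    (hdiag : ∀ i, 0 < b i i) (htri : ∀ i j : Fin n, j < i → b i j = 0) :
    (∃ H : (Delta n) ≃ₜ (psi b '' Delta n),
      ∀ w : Delta n, (H w : Fin n → ℝ) = psi b (w : Fin n → ℝ)) ∧
    IsCompact (psi b '' Delta n) := by
  have hcomp := delta_compact n
  have hcont := psi_continuous b
  have himg : IsCompact (psi b '' Delta n) := hcomp.image hcont
  refine ⟨?_, himg⟩
  haveI : CompactSpace (Delta n) := isCompact_iff_compactSpace.mp hcomp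
  let f : (Delta n) → (psi b '' Delta n) :=
    fun w => ⟨psi b w, Set.mem_image_of_mem _ w.2⟩
  have hfc : Continuous f := Continuous.subtype_mk (hcont.comp continuous_subtype_val) _
  have hbij : Function.Bijective f := by
    constructor
    · intro x y hxy
      exact Subtype.ext (psi_injOn b hdiag htri x.2 y.2 (congrArg Subtype.val hxy))
    · rintro ⟨y, w, hw, rfl⟩
      exact ⟨⟨w, hw⟩, rfl⟩
  exact ⟨Continuous.homeoOfEquivCompactToT2 (f := Equiv.ofBijective f hbij) hfc,
    fun w => rfl⟩
end

section
/- Let q ∈ Δ_n and let (p_m)_{m≥1} be a sequence in [0,∞)^n such that ψ(p_m) converges to ψ(q) in ℝ^n. If j ∈ {1,…,n−1} is an index such that (p_m)_j ≥ (p_m)_{j+1} for all m, then q_j = q_{j+1}. -/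
lemma tendsto_of_pow_tendsto {a : ℕ → ℝ} {L : ℝ} {b : ℕ} (hb : 0 < b)
    (ha : ∀ m, 0 ≤ a m) (hL : 0 ≤ L)
    (h : Filter.Tendsto (fun m => a m ^ b) Filter.atTop (nhds (L ^ b))) :
    Filter.Tendsto a Filter.atTop (nhds L) := by
  have hc : ContinuousAt (fun x : ℝ => x ^ ((b : ℝ)⁻¹)) (L ^ b) :=
    Real.continuousAt_rpow_const _ _ (Or.inr (by positivity))
  have h2 := hc.tendsto.comp h
  have hbne : (b : ℝ) ≠ 0 := by exact_mod_cast hb.ne'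
  have e1 : (L ^ b) ^ ((b : ℝ)⁻¹) = L := by
    rw [← Real.rpow_natCast L b, ← Real.rpow_mul hL, mul_inv_cancel₀ hbne,
      Real.rpow_one]
  rw [e1] at h2
  refine h2.congr fun m => ?_
  simp only [Function.comp]
  rw [← Real.rpow_natCast (a m) b, ← Real.rpow_mul (ha m), mul_inv_cancel₀ hbne,
    Real.rpow_one]

/-- if `q ∈ Δ_n`, `(p_m)` is a sequence in `[0,∞)^n` with
`ψ(p_m) → ψ(q)`, and `j` is an index with `(p_m)_j ≥ (p_m)_{j+1}` for all `m`,
then `q_j = q_{j+1}`. -/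
theorem stmt_6 (n : ℕ) (hn : 1 ≤ n) (b : Fin n → Fin n → ℕ)
    (hdiag : ∀ i, 0 < b i i) (htri : ∀ i j : Fin n, j < i → b i j = 0)
    (q : Fin n → ℝ) (hq : q ∈ Delta n)
    (p : ℕ → Fin n → ℝ) (hp : ∀ m i, 0 ≤ p m i)
    (hconv : Filter.Tendsto (fun m => psi b (p m)) Filter.atTop (nhds (psi b q)))
    (j : Fin n) (hj : (j : ℕ) + 1 < n)
    (hmono : ∀ m, p m ⟨(j : ℕ) + 1, hj⟩ ≤ p m j) :
    q j = q ⟨(j : ℕ) + 1, hj⟩ := by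
  obtain ⟨hqm, hq01⟩ := hq
  set j1 : Fin n := ⟨(j : ℕ) + 1, hj⟩ with hj1def
  have hjj1 : j < j1 := by
    simp [Fin.lt_def, hj1def]
  by_cases h0 : q j1 = 0
  · have h1 : q j ≤ 0 := h0 ▸ hqm hjj1.le
    have h2 : 0 ≤ q j := (hq01 j).1
    rw [h0]; linarith
  · have hq1pos : 0 < q j1 := lt_of_le_of_ne (hq01 j1).1 (Ne.symm h0)
    have key : ∀ d : ℕ, ∀ i : Fin n, j ≤ i → n ≤ (i : ℕ) + d →
        Filter.Tendsto (fun m => p m i) Filter.atTop (nhds (q i)) := by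
      intro d
      induction d with
      | zero => intro i _ hni; exact absurd hni (by omega)
      | succ d ih =>
        intro i hji hni
        -- positivity of q on indices > i (when b i k ≠ 0)
        have hqk_pos : ∀ k : Fin n, i < k → 0 < q k := by
          intro k hik
          refine lt_of_lt_of_le hq1pos (hqm ?_)
          have : (j : ℕ) < (k : ℕ) := lt_of_le_of_lt hji hik
          exact Fin.le_def.mpr (by simp [hj1def]; omega)
        -- convergence of each off-diagonal factor
        have htail : ∀ k ∈ Finset.univ.erase i,
            Filter.Tendsto (fun m => p m k ^ b i k) Filter.atTop
              (nhds (q k ^ b i k)) := by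
          intro k hk
          rcases Nat.eq_zero_or_pos (b i k) with hbz | hbp
          · simp [hbz]
          · have hik : i < k := by
              rcases lt_trichotomy k i with h | h | h
              · exact absurd (htri i k h) hbp.ne'
              · exact absurd h (Finset.ne_of_mem_erase hk)
              · exact h
            exact (ih k (hji.trans hik.le) (by
              have : (i : ℕ) < (k : ℕ) := hik
              omega)).pow _
        have htailT : Filter.Tendsto
            (fun m => ∏ k ∈ Finset.univ.erase i, p m k ^ b i k) Filter.atTop
            (nhds (∏ k ∈ Finset.univ.erase i, q k ^ b i k)) :=
          tendsto_finset_prod _ htail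
        have hTpos : 0 < ∏ k ∈ Finset.univ.erase i, q k ^ b i k := by
          refine Finset.prod_pos fun k hk => ?_
          rcases Nat.eq_zero_or_pos (b i k) with hbz | hbp
          · simp [hbz]
          · have hik : i < k := by
              rcases lt_trichotomy k i with h | h | h
              · exact absurd (htri i k h) hbp.ne'
              · exact absurd h (Finset.ne_of_mem_erase hk)
              · exact h
            exact pow_pos (hqk_pos k hik) _
        have hcomp : Filter.Tendsto
            (fun m => p m i ^ b i i * ∏ k ∈ Finset.univ.erase i, p m k ^ b i k)
            Filter.atTop
            (nhds (q i ^ b i i * ∏ k ∈ Finset.univ.erase i, q k ^ b i k)) := by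
          have hc := (tendsto_pi_nhds.mp hconv) i
          have e : ∀ w : Fin n → ℝ,
              w i ^ b i i * ∏ k ∈ Finset.univ.erase i, w k ^ b i k = psi b w i := by
            intro w
            exact Finset.mul_prod_erase Finset.univ (fun k => w k ^ b i k)
              (Finset.mem_univ i)
          simpa only [e] using hc
        -- divide by the tail
        have hdiv : Filter.Tendsto
            (fun m => (p m i ^ b i i *
              ∏ k ∈ Finset.univ.erase i, p m k ^ b i k) /
              ∏ k ∈ Finset.univ.erase i, p m k ^ b i k)
            Filter.atTop
            (nhds ((q i ^ b i i * ∏ k ∈ Finset.univ.erase i, q k ^ b i k) /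
              ∏ k ∈ Finset.univ.erase i, q k ^ b i k)) :=
          hcomp.div htailT hTpos.ne'
        rw [mul_div_cancel_right₀ _ hTpos.ne'] at hdiv
        have hev : ∀ᶠ m in Filter.atTop,
            (0 : ℝ) < ∏ k ∈ Finset.univ.erase i, p m k ^ b i k :=
          htailT.eventually (eventually_gt_nhds hTpos)
        have hpow : Filter.Tendsto (fun m => p m i ^ b i i) Filter.atTop
            (nhds (q i ^ b i i)) := by
          refine hdiv.congr' ?_
          filter_upwards [hev] with m hm
          rw [mul_div_cancel_right₀ _ hm.ne']
        exact tendsto_of_pow_tendsto (hdiag i) (fun m => hp m i) (hq01 i).1 hpow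
    have hpj : Filter.Tendsto (fun m => p m j) Filter.atTop (nhds (q j)) :=
      key n j le_rfl (by omega)
    have hpj1 : Filter.Tendsto (fun m => p m j1) Filter.atTop (nhds (q j1)) :=
      key n j1 hjj1.le (by omega)
    have hle : q j1 ≤ q j :=
      le_of_tendsto_of_tendsto' hpj1 hpj hmono
    exact le_antisymm (hqm hjj1.le) hle
end
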